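/- arXiv:2508.21106 — 2 statements merged into one kernel-verified Lean document; each statement's English description precedes it below -/
import Mathlib

section
/- Let L be an invertible n×n real matrix, G = LLᵀ, g ∈ ℝ^n, ḡ = L^{-1} g, and α = α(ḡ). Then the matrix L' = L(I + α ḡḡᵀ) is invertible and satisfies L' (L')ᵀ = G + ggᵀ. -/
open Matrix Finset

/-- The Euclidean norm of a vector in ℝ^n. -/
noncomputable def euclNorm {n : ℕ} (v : Fin n → ℝ) : ℝ :=
  Real.sqrt (∑ i, v i ^ 2)

/-- `α(v) = (√(1 + ‖v‖²) − 1)/‖v‖²` (equal to `0` when `v = 0`). -/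
noncomputable def alphaF {n : ℕ} (v : Fin n → ℝ) : ℝ :=
  (Real.sqrt (1 + euclNorm v ^ 2) - 1) / euclNorm v ^ 2

/-- The rank-one outer product `u wᵀ`. -/
def outer {n : ℕ} (u w : Fin n → ℝ) : Matrix (Fin n) (Fin n) ℝ :=
  Matrix.of fun i j => u i * w j

lemma outer_transpose {n : ℕ} (u w : Fin n → ℝ) : (outer u w)ᵀ = outer w u := by
  ext i j; simp [outer, Matrix.transpose_apply, mul_comm]

lemma outer_mul_outer {n : ℕ} (u w x y : Fin n → ℝ) :
    outer u w * outer x y = (∑ k, w k * x k) • outer u y := by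
  ext i j
  simp only [outer, Matrix.mul_apply, Matrix.smul_apply, Matrix.of_apply, smul_eq_mul]
  rw [Finset.sum_mul]
  exact Finset.sum_congr rfl fun k _ => by ring

lemma mul_outer_mul {n : ℕ} (L : Matrix (Fin n) (Fin n) ℝ) (u w : Fin n → ℝ) :
    L * outer u w * Lᵀ = outer (L.mulVec u) (L.mulVec w) := by
  ext i j
  simp only [outer, Matrix.mul_apply, Matrix.transpose_apply, Matrix.of_apply,
    Matrix.mulVec, dotProduct, Finset.sum_mul, Finset.mul_sum]
  exact Finset.sum_congr rfl fun l _ => Finset.sum_congr rfl fun k _ => by ring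

/-- if `L` is invertible, `G = LLᵀ`, `ḡ = L⁻¹ g` and `α = α(ḡ)`, then
`L' = L(I + α ḡḡᵀ)` is invertible and `L' (L')ᵀ = G + ggᵀ`. -/
theorem cholesky_rank_one_update {n : ℕ} (L : Matrix (Fin n) (Fin n) ℝ)
    (hL : IsUnit L.det) (g : Fin n → ℝ) :
    IsUnit (L * ((1 : Matrix (Fin n) (Fin n) ℝ) +
        alphaF (L⁻¹.mulVec g) • outer (L⁻¹.mulVec g) (L⁻¹.mulVec g))).det ∧
    (L * ((1 : Matrix (Fin n) (Fin n) ℝ) +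
        alphaF (L⁻¹.mulVec g) • outer (L⁻¹.mulVec g) (L⁻¹.mulVec g))) *
      (L * ((1 : Matrix (Fin n) (Fin n) ℝ) +
        alphaF (L⁻¹.mulVec g) • outer (L⁻¹.mulVec g) (L⁻¹.mulVec g)))ᵀ
    = L * Lᵀ + outer g g := by
  set v : Fin n → ℝ := L⁻¹.mulVec g with hv
  set α : ℝ := alphaF v with hα
  set P : Matrix (Fin n) (Fin n) ℝ := outer v v with hP
  set s : ℝ := ∑ k, v k * v k with hs
  have hg : L.mulVec v = g := by
    rw [hv, Matrix.mulVec_mulVec, Matrix.mul_nonsing_inv L hL, Matrix.one_mulVec]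
  have hLu : IsUnit L := (Matrix.isUnit_iff_isUnit_det L).mpr hL
  have hPP : P * P = s • P := by rw [hP, outer_mul_outer, hs]
  have hsnn : 0 ≤ s := by
    rw [hs]; exact Finset.sum_nonneg fun k _ => mul_self_nonneg _
  have hnorm : euclNorm v ^ 2 = s := by
    rw [euclNorm, Real.sq_sqrt]
    · rw [hs]; congr 1; ext k; ring
    · exact Finset.sum_nonneg fun k _ => sq_nonneg _
  have hαs : α = (Real.sqrt (1 + s) - 1) / s := by rw [hα, alphaF, hnorm]
  have hsq : Real.sqrt (1 + s) ^ 2 = 1 + s := Real.sq_sqrt (by linarith)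
  have hsqrt1 : 1 ≤ Real.sqrt (1 + s) := by
    have := Real.sqrt_le_sqrt (show (1:ℝ) ≤ 1 + s by linarith)
    rwa [Real.sqrt_one] at this
  -- transpose of the factor
  have hMT : ((1 : Matrix (Fin n) (Fin n) ℝ) + α • P)ᵀ = 1 + α • P := by
    rw [Matrix.transpose_add, Matrix.transpose_one, Matrix.transpose_smul, hP,
      outer_transpose]
  -- key: M * M = 1 + (2α + α²s) • P
  have hMM : ((1 : Matrix (Fin n) (Fin n) ℝ) + α • P) * (1 + α • P)
      = 1 + (2 * α + α ^ 2 * s) • P := by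
    have hq : (α • P) * (α • P) = (α ^ 2 * s) • P := by
      rw [Matrix.smul_mul, Matrix.mul_smul, smul_smul, hPP, smul_smul]
      congr 1; ring
    rw [add_mul, mul_add, mul_add, hq]
    simp only [one_mul, mul_one]
    rw [add_assoc, ← add_smul, ← add_smul]
    congr 2; ring
  have hkey : (2 * α + α ^ 2 * s) • P = P := by
    by_cases hz : s = 0
    · have hall : ∀ k, v k = 0 := fun k => mul_self_eq_zero.mp
        ((Finset.sum_eq_zero_iff_of_nonneg
          (fun k _ => mul_self_nonneg (v k))).mp (hs ▸ hz) k (Finset.mem_univ k))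
      have : P = 0 := by ext i j; simp [hP, outer, hall i]
      rw [this, smul_zero]
    · have hαsval : α * s = Real.sqrt (1 + s) - 1 := by
        rw [hαs, div_mul_cancel₀ _ hz]
      have : 2 * α + α ^ 2 * s = 1 := by
        have h2 : (2 * α + α ^ 2 * s) * s = s := by nlinarith [hαsval, hsq]
        have := mul_right_cancel₀ hz (by rw [h2, one_mul] : (2 * α + α ^ 2 * s) * s = 1 * s)
        exact this
      rw [this, one_smul]
  constructor
  · -- invertibility
    rw [← Matrix.isUnit_iff_isUnit_det]
    refine hLu.mul ?_
    set β : ℝ := α / (1 + α * s) with hβ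
    have hne : (1 + α * s) ≠ 0 := by
      by_cases hz : s = 0
      · rw [hαs, hz]; norm_num
      · have : α * s = Real.sqrt (1 + s) - 1 := by rw [hαs, div_mul_cancel₀ _ hz]
        rw [this]; intro h; nlinarith [hsqrt1]
    have hβeq : β * (1 + α * s) = α := div_mul_cancel₀ _ hne
    have hMN : ((1 : Matrix (Fin n) (Fin n) ℝ) + α • P) * (1 + (-β) • P) = 1 := by
      have hq : (α • P) * ((-β) • P) = (α * (-β) * s) • P := by
        rw [Matrix.smul_mul, Matrix.mul_smul, smul_smul, hPP, smul_smul]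
        try congr 1
        try ring
      rw [add_mul, mul_add, mul_add, hq]
      simp only [one_mul, mul_one]
      have : (-β) • P + (α • P + (α * (-β) * s) • P) = 0 := by
        rw [← add_smul, ← add_smul]
        have hc : -β + (α + α * (-β) * s) = 0 := by nlinarith [hβeq]
        rw [hc, zero_smul]
      rw [add_assoc, this, add_zero]
    have hNM : ((1 : Matrix (Fin n) (Fin n) ℝ) + (-β) • P) * (1 + α • P) = 1 :=
      mul_eq_one_comm.mp hMN
    exact ⟨⟨_, _, hMN, hNM⟩, rfl⟩
  · -- the product identity
    rw [Matrix.transpose_mul, hMT, show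
      L * (1 + α • P) * ((1 + α • P) * Lᵀ) = L * ((1 + α • P) * (1 + α • P)) * Lᵀ by
        noncomm_ring]
    rw [hMM, hkey, mul_add, mul_one, add_mul, mul_outer_mul, hg]
end

section
/- (Theorem 1, full recursive form.) Fix ε > 0 and a sequence of vectors g₁, g₂, … ∈ ℝ^n. Define G_t = εI + Σ_{τ=1}^{t} g_τ g_τᵀ, and define matrices L_t recursively by L₀ = √ε · I and L_{t+1} = L_t (I + α(ḡ_{t+1}) ḡ_{t+1} ḡ_{t+1}ᵀ) where ḡ_{t+1} = L_t^{-1} g_{t+1}. Then for every t ≥ 0: L_t is invertible, L_t L_tᵀ = G_t, and the preconditioned gradient satisfies L_{t+1}^{-1} g_{t+1} = (1 + ‖L_t^{-1} g_{t+1}‖²)^{-1/2} · L_t^{-1} g_{t+1}. -/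
/-!
Write `M(v) = I + α(v) v vᵀ` and `β = √(1 + ‖v‖²)`. The choice of `α` is exactly what makes
`1 + α(v) ‖v‖² = β`; hence `M(v)` is symmetric, `M(v) v = β v`, `det M(v) = β` (matrix
determinant lemma) and `M(v)² = I + v vᵀ`. With `v = L_t⁻¹ g`, this gives
`L_{t+1} L_{t+1}ᵀ = L_t (I + v vᵀ) L_tᵀ = L_t L_tᵀ + g gᵀ` and `L_{t+1}⁻¹ g = M(v)⁻¹ v = β⁻¹ v`.
-/

open Matrix Finset

namespace Matrix

variable {ι R : Type*} [DecidableEq ι]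

lemma transpose_one_add_smul_vecMulVec_self [CommRing R] (c : R) (v : ι → R) :
    (1 + c • vecMulVec v v)ᵀ = 1 + c • vecMulVec v v := by
  rw [transpose_add, transpose_one, transpose_smul, transpose_vecMulVec]

variable [Fintype ι]

section CommRing

variable [CommRing R] (c : R) (v : ι → R)

lemma one_add_smul_vecMulVec_self_mulVec :
    (1 + c • vecMulVec v v) *ᵥ v = (1 + c * (v ⬝ᵥ v)) • v := by
  rw [add_mulVec, one_mulVec, smul_mulVec, vecMulVec_mulVec, op_smul_eq_smul, smul_smul,
    add_smul, one_smul]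

lemma det_one_add_smul_vecMulVec_self :
    (1 + c • vecMulVec v v).det = 1 + c * (v ⬝ᵥ v) := by
  rw [← smul_vecMulVec, vecMulVec_eq Unit, det_one_add_replicateCol_mul_replicateRow,
    dotProduct_smul, smul_eq_mul]

end CommRing

lemma one_add_smul_vecMulVec_self_mul_self [Field R] [LinearOrder R] [IsStrictOrderedRing R]
    {c : R} {v : ι → R} (hc : (1 + c * (v ⬝ᵥ v)) ^ 2 = 1 + v ⬝ᵥ v) :
    (1 + c • vecMulVec v v) * (1 + c • vecMulVec v v) = 1 + vecMulVec v v := by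
  have expand : (1 + c • vecMulVec v v) * (1 + c • vecMulVec v v) =
      1 + (2 * c + c ^ 2 * (v ⬝ᵥ v)) • vecMulVec v v := by
    simp only [add_mul, mul_add, one_mul, mul_one, Matrix.smul_mul, Matrix.mul_smul,
      vecMulVec_mul_vecMulVec, vecMulVec_smul, smul_smul]
    module
  rw [expand]
  rcases eq_or_ne (v ⬝ᵥ v) 0 with hv | hv
  · simp [dotProduct_self_eq_zero.mp hv]
  · have : 2 * c + c ^ 2 * (v ⬝ᵥ v) = 1 := by
      apply mul_right_cancel₀ hv
      linear_combination hc
    rw [this, one_smul]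

end Matrix

variable {n : ℕ}

lemma outer_eq_vecMulVec (u w : Fin n → ℝ) : outer u w = vecMulVec u w := rfl

lemma euclNorm_sq (v : Fin n → ℝ) : euclNorm v ^ 2 = v ⬝ᵥ v := by
  rw [euclNorm, Real.sq_sqrt (Finset.sum_nonneg fun i _ => sq_nonneg _)]
  simp only [dotProduct, sq]

lemma one_add_alphaF_mul (v : Fin n → ℝ) :
    1 + alphaF v * euclNorm v ^ 2 = √(1 + euclNorm v ^ 2) := by
  rw [alphaF]
  rcases eq_or_ne (euclNorm v ^ 2) 0 with hv | hv
  · simp [hv]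
  · rw [div_mul_cancel₀ _ hv]
    ring

noncomputable def choleskyFactor (v : Fin n → ℝ) : Matrix (Fin n) (Fin n) ℝ :=
  1 + alphaF v • outer v v

lemma choleskyFactor_transpose (v : Fin n → ℝ) : (choleskyFactor v)ᵀ = choleskyFactor v :=
  transpose_one_add_smul_vecMulVec_self _ v

lemma choleskyFactor_mul_self (v : Fin n → ℝ) :
    choleskyFactor v * choleskyFactor v = 1 + outer v v := by
  refine one_add_smul_vecMulVec_self_mul_self ?_
  rw [← euclNorm_sq, one_add_alphaF_mul, Real.sq_sqrt (by positivity)]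

lemma choleskyFactor_mulVec_self (v : Fin n → ℝ) :
    choleskyFactor v *ᵥ v = √(1 + euclNorm v ^ 2) • v := by
  rw [choleskyFactor, outer_eq_vecMulVec, one_add_smul_vecMulVec_self_mulVec, ← euclNorm_sq,
    one_add_alphaF_mul]

lemma det_choleskyFactor (v : Fin n → ℝ) : (choleskyFactor v).det = √(1 + euclNorm v ^ 2) := by
  rw [choleskyFactor, outer_eq_vecMulVec, det_one_add_smul_vecMulVec_self, ← euclNorm_sq,
    one_add_alphaF_mul]

lemma isUnit_det_choleskyFactor (v : Fin n → ℝ) : IsUnit (choleskyFactor v).det := by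
  rw [det_choleskyFactor]
  exact (Real.sqrt_pos.mpr (by positivity)).ne'.isUnit

lemma inv_choleskyFactor_mulVec_self (v : Fin n → ℝ) :
    (choleskyFactor v)⁻¹ *ᵥ v = (√(1 + euclNorm v ^ 2))⁻¹ • v := by
  have hβ : √(1 + euclNorm v ^ 2) ≠ 0 := (Real.sqrt_pos.mpr (by positivity)).ne'
  rw [eq_inv_smul_iff₀ hβ, ← mulVec_smul, ← choleskyFactor_mulVec_self, mulVec_mulVec,
    nonsing_inv_mul _ (isUnit_det_choleskyFactor v), one_mulVec]

lemma mul_choleskyFactor_inv_mulVec (L : Matrix (Fin n) (Fin n) ℝ) (g : Fin n → ℝ) :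
    (L * choleskyFactor (L⁻¹ *ᵥ g))⁻¹ *ᵥ g =
      (√(1 + euclNorm (L⁻¹ *ᵥ g) ^ 2))⁻¹ • L⁻¹ *ᵥ g := by
  rw [Matrix.mul_inv_rev, ← mulVec_mulVec, inv_choleskyFactor_mulVec_self]

lemma mul_choleskyFactor_mul_transpose {L : Matrix (Fin n) (Fin n) ℝ} (hL : IsUnit L.det)
    (g : Fin n → ℝ) :
    L * choleskyFactor (L⁻¹ *ᵥ g) * (L * choleskyFactor (L⁻¹ *ᵥ g))ᵀ = L * Lᵀ + outer g g := by
  have hg : L *ᵥ (L⁻¹ *ᵥ g) = g := by rw [mulVec_mulVec, mul_nonsing_inv _ hL, one_mulVec]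
  calc L * choleskyFactor (L⁻¹ *ᵥ g) * (L * choleskyFactor (L⁻¹ *ᵥ g))ᵀ
      = L * (choleskyFactor (L⁻¹ *ᵥ g) * choleskyFactor (L⁻¹ *ᵥ g)) * Lᵀ := by
        rw [transpose_mul, choleskyFactor_transpose]; noncomm_ring
    _ = L * Lᵀ + outer g g := by
        rw [choleskyFactor_mul_self, mul_add, mul_one, add_mul, outer_eq_vecMulVec,
          outer_eq_vecMulVec, mul_vecMulVec, vecMulVec_mul, hg, vecMul_transpose, hg]

lemma isUnit_det_sqrt_smul_one {ε : ℝ} (hε : 0 < ε) :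
    IsUnit (√ε • (1 : Matrix (Fin n) (Fin n) ℝ)).det := by
  rw [det_smul, det_one, mul_one]
  exact ((Real.sqrt_pos.mpr hε).ne'.isUnit).pow _

-- `g t` plays the role of the paper's `g_{t+1}`.
/-- Theorem 1, full recursive form.  Here `g t` plays the role of
`g_{t+1}`, so `G_t = εI + ∑_{τ < t} g_τ g_τᵀ`, `L₀ = √ε · I` and
`L_{t+1} = L_t (I + α(ḡ) ḡ ḡᵀ)` with `ḡ = L_t⁻¹ g_t`.  Then for every `t`:
`L_t` is invertible, `L_t L_tᵀ = G_t`, and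
`L_{t+1}⁻¹ g_t = (1 + ‖L_t⁻¹ g_t‖²)^{-1/2} · L_t⁻¹ g_t`. -/
theorem adagram_recursive_cholesky {n : ℕ} (ε : ℝ) (hε : 0 < ε)
    (g : ℕ → Fin n → ℝ) (L : ℕ → Matrix (Fin n) (Fin n) ℝ)
    (hL0 : L 0 = Real.sqrt ε • (1 : Matrix (Fin n) (Fin n) ℝ))
    (hLrec : ∀ t : ℕ, L (t + 1) =
      L t * ((1 : Matrix (Fin n) (Fin n) ℝ) +
        alphaF ((L t)⁻¹.mulVec (g t)) •
          outer ((L t)⁻¹.mulVec (g t)) ((L t)⁻¹.mulVec (g t)))) :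
    ∀ t : ℕ,
      IsUnit (L t).det ∧
      L t * (L t)ᵀ =
        ε • (1 : Matrix (Fin n) (Fin n) ℝ) + ∑ τ ∈ Finset.range t, outer (g τ) (g τ) ∧
      (L (t + 1))⁻¹.mulVec (g t) =
        (Real.sqrt (1 + euclNorm ((L t)⁻¹.mulVec (g t)) ^ 2))⁻¹ • (L t)⁻¹.mulVec (g t) := by
  have hstep : ∀ t, L (t + 1) = L t * choleskyFactor ((L t)⁻¹ *ᵥ g t) := hLrec
  have hfactor : ∀ t, IsUnit (L t).det ∧
      L t * (L t)ᵀ = ε • 1 + ∑ τ ∈ range t, outer (g τ) (g τ) := by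
    intro t
    induction t with
    | zero =>
      rw [hL0, transpose_smul, transpose_one, smul_mul_smul_comm, mul_one,
        Real.mul_self_sqrt hε.le, range_zero, sum_empty, add_zero]
      exact ⟨isUnit_det_sqrt_smul_one hε, rfl⟩
    | succ t ih =>
      rw [hstep, det_mul, mul_choleskyFactor_mul_transpose ih.1, ih.2, sum_range_succ, add_assoc]
      exact ⟨ih.1.mul (isUnit_det_choleskyFactor _), rfl⟩
  intro t
  exact ⟨(hfactor t).1, (hfactor t).2,
    by rw [hstep, mul_choleskyFactor_inv_mulVec]⟩
end
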